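/- arXiv:2306.03225 — 4 statements merged into one kernel-verified Lean document; each statement's English description precedes it below -/
import Mathlib

section
/- For every morphism f : P → Q, one has Σ_{i=1}^{s} x^i ⊗ (f ∘ x_i) = Σ_{j=1}^{t} (y^j ∘ f) ⊗ y_j in the tensor product Hom(P,I) ⊗_k Hom(I,Q) of hom-spaces. -/
/-! Expanding `x i ≫ f` in the basis `y` and `f ≫ yd j` in the basis `xd` (the coordinates being
read off by the trace pairings) writes both sides as `∑ i j, c i j • xd i ⊗ₜ y j`, with
`c i j = tQ (yd j ≫ x i ≫ f)` on the left and `c i j = tP (f ≫ yd j ≫ x i)` on the right;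
these agree by cyclicity of the traces. -/

open CategoryTheory TensorProduct

namespace Module.Basis

variable {R M ι : Type*} [CommSemiring R] [AddCommMonoid M] [Module R M]
  [Fintype ι] [DecidableEq ι]

theorem sum_apply_smul_of_biorthogonal (b : Basis ι R M) (c : ι → M →ₗ[R] R)
    (hc : ∀ i j, c j (b i) = if i = j then 1 else 0) (m : M) :
    ∑ j, c j m • b j = m := by
  have hcoord : ∀ j, c j = b.coord j := fun j =>
    b.ext fun i => by simp [hc, Finsupp.single_apply]
  simpa only [hcoord, coord_apply] using b.sum_repr m

end Module.Basis

theorem TensorProduct.sum_tmul_sum_smul {R M N ι κ : Type*} [CommSemiring R]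
    [AddCommMonoid M] [AddCommMonoid N] [Module R M] [Module R N] [Fintype ι] [Fintype κ]
    (a : ι → M) (b : κ → N) (c : ι → κ → R) :
    ∑ i, a i ⊗ₜ[R] (∑ j, c i j • b j) = ∑ j, (∑ i, c i j • a i) ⊗ₜ[R] b j := by
  simp only [tmul_sum, sum_tmul, tmul_smul, smul_tmul']
  exact Finset.sum_comm

/-- **Naturality of the copairing associated to a cyclic trace.**
In a `k`-linear category `𝒞`, given objects `I, P, Q`, linear functionals
`tP : End P → k`, `tQ : End Q → k` satisfying the cyclicity property, and dual bases
`x_i : I ⟶ P`, `xᵢ* : P ⟶ I` (resp. `y_j : I ⟶ Q`, `yⱼ* : Q ⟶ I`) with respect to `tP`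
(resp. `tQ`), then for every morphism `f : P ⟶ Q` one has
`Σᵢ xᵢ* ⊗ (f ∘ x_i) = Σⱼ (yⱼ* ∘ f) ⊗ y_j` in `Hom(P,I) ⊗[k] Hom(I,Q)`. -/
theorem copairing_naturality
    {k : Type*} [Field k] {C : Type*} [Category C] [Preadditive C] [Linear k C]
    (I P Q : C)
    (tP : (P ⟶ P) →ₗ[k] k) (tQ : (Q ⟶ Q) →ₗ[k] k)
    (hcyc : ∀ (v : P ⟶ Q) (u : Q ⟶ P), tQ (u ≫ v) = tP (v ≫ u))
    {s t : ℕ}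
    (x : Module.Basis (Fin s) k (I ⟶ P)) (xd : Module.Basis (Fin s) k (P ⟶ I))
    (hx : ∀ i j : Fin s, tP (xd j ≫ x i) = if i = j then 1 else 0)
    (y : Module.Basis (Fin t) k (I ⟶ Q)) (yd : Module.Basis (Fin t) k (Q ⟶ I))
    (hy : ∀ i j : Fin t, tQ (yd j ≫ y i) = if i = j then 1 else 0)
    (f : P ⟶ Q) :
    (∑ i : Fin s, xd i ⊗ₜ[k] (x i ≫ f)) =
      (∑ j : Fin t, (f ≫ yd j) ⊗ₜ[k] y j) := by
  have expand_y (a : I ⟶ Q) : ∑ j, tQ (yd j ≫ a) • y j = a :=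
    y.sum_apply_smul_of_biorthogonal (fun j => tQ ∘ₗ Linear.leftComp k Q (yd j)) hy a
  have expand_xd (b : P ⟶ I) : ∑ i, tP (b ≫ x i) • xd i = b :=
    xd.sum_apply_smul_of_biorthogonal (fun i => tP ∘ₗ Linear.rightComp k P (x i))
      (fun i j => by simpa [eq_comm] using hx j i) b
  calc ∑ i, xd i ⊗ₜ[k] (x i ≫ f)
      = ∑ i, xd i ⊗ₜ[k] ∑ j, tQ (yd j ≫ x i ≫ f) • y j := by simp only [expand_y]
    _ = ∑ j, (∑ i, tQ (yd j ≫ x i ≫ f) • xd i) ⊗ₜ[k] y j := sum_tmul_sum_smul _ _ _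
    _ = ∑ j, (f ≫ yd j) ⊗ₜ[k] y j := by
      simp only [← Category.assoc, hcyc, expand_xd]
end

section
/- Fix a nonzero element Λ of the orthogonal complement J^⊥ = {a ∈ A : t(a·j) = 0 for all j ∈ J}. Then for every nonzero f ∈ A there exists g ∈ A such that g·f = Λ. -/
/-- The orthogonal complement `J^⊥ = {a ∈ A : t(a·j) = 0 for all j ∈ J}` of a
subspace `J` of an algebra `A` with respect to the bilinear form `(a,b) ↦ t(ab)`. -/
def orthComplement {k A : Type*} [Field k] [Ring A] [Algebra k A]
    (J : Submodule k A) (t : A →ₗ[k] k) : Submodule k A where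
  carrier := {a | ∀ j ∈ J, t (a * j) = 0}
  add_mem' := by
    intro a b ha hb j hj
    rw [add_mul, map_add, ha j hj, hb j hj, add_zero]
  zero_mem' := by
    intro j hj
    rw [zero_mul, map_zero]
  smul_mem' := by
    intro c a ha j hj
    rw [smul_mul_assoc, map_smul, ha j hj, smul_zero]

/-!
For a symmetric nondegenerate trace form on a finite-dimensional algebra, the orthogonal of the
left ideal `A·f` is the right annihilator of `f`, so `A·f` is the orthogonal of that annihilator.
When `f ≠ 0`, every `u` with `f·u = 0` is a non-unit, i.e. lies in `J`, and `Λ ∈ J^⊥` is orthogonal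
to all of them; hence `Λ ∈ A·f`.
-/

section TraceForm

variable {k A : Type*} [Field k] [Ring A] [Algebra k A]

def mulForm (t : A →ₗ[k] k) : LinearMap.BilinForm k A :=
  (LinearMap.mul k A).compr₂ t

@[simp]
theorem mulForm_apply (t : A →ₗ[k] k) (a b : A) : mulForm t a b = t (a * b) := rfl

variable {t : A →ₗ[k] k}

theorem mulForm_isRefl (htr : ∀ a b : A, t (a * b) = t (b * a)) : (mulForm t).IsRefl :=
  fun a b h => by rwa [mulForm_apply, htr] at h

theorem mulForm_nondegenerate (htr : ∀ a b : A, t (a * b) = t (b * a))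
    (hnd : ∀ a : A, (∀ b : A, t (a * b) = 0) → a = 0) : (mulForm t).Nondegenerate :=
  (mulForm_isRefl htr).nondegenerate_iff_separatingLeft.2 hnd

theorem mulForm_orthogonal_range_mulRight (htr : ∀ a b : A, t (a * b) = t (b * a))
    (hnd : ∀ a : A, (∀ b : A, t (a * b) = 0) → a = 0) (f : A) :
    (mulForm t).orthogonal (LinearMap.range (LinearMap.mulRight k f)) =
      LinearMap.ker (LinearMap.mulLeft k f) := by
  ext u
  simp only [LinearMap.BilinForm.mem_orthogonal_iff, LinearMap.mem_range,
    LinearMap.mulRight_apply, LinearMap.mem_ker, LinearMap.mulLeft_apply,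
    mulForm_apply, forall_exists_index, forall_apply_eq_imp_iff]
  constructor
  · intro h
    exact hnd _ fun x => by rw [htr, ← mul_assoc, h]
  · intro h x
    rw [mul_assoc, h, mul_zero, map_zero]

theorem exists_mul_eq_iff_of_trace_nondegenerate [FiniteDimensional k A]
    (htr : ∀ a b : A, t (a * b) = t (b * a))
    (hnd : ∀ a : A, (∀ b : A, t (a * b) = 0) → a = 0) (f Λ : A) :
    (∃ g, g * f = Λ) ↔ ∀ u : A, f * u = 0 → t (Λ * u) = 0 := by
  have hrange := LinearMap.BilinForm.orthogonal_orthogonal (mulForm_nondegenerate htr hnd)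
    (mulForm_isRefl htr) (LinearMap.range (LinearMap.mulRight k f))
  rw [mulForm_orthogonal_range_mulRight htr hnd] at hrange
  have hmem := congrArg (Λ ∈ ·) hrange
  simp only [LinearMap.BilinForm.mem_orthogonal_iff, LinearMap.mem_range,
    LinearMap.mulRight_apply, LinearMap.mem_ker, LinearMap.mulLeft_apply,
    mulForm_apply, eq_iff_iff] at hmem
  rw [← hmem]
  exact forall_congr' fun u => imp_congr_right fun _ => by rw [htr]

end TraceForm

theorem exists_gluing_general
    {k A : Type*} [Field k] [Ring A] [Algebra k A]
    [FiniteDimensional k A]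
    (J : Submodule k A)
    (hJ : ∀ a : A, a ∈ J ↔ ¬ IsUnit a)
    (t : A →ₗ[k] k)
    (htr : ∀ a b : A, t (a * b) = t (b * a))
    (hnd : ∀ a : A, (∀ b : A, t (a * b) = 0) → a = 0)
    (Λ : A) (hΛmem : Λ ∈ orthComplement J t) :
    ∀ f : A, f ≠ 0 → ∃ g : A, g * f = Λ := by
  intro f hf
  rw [exists_mul_eq_iff_of_trace_nondegenerate htr hnd]
  intro u hfu
  have hu : ¬IsUnit u := fun hu => hf (hu.mul_left_eq_zero.1 hfu)
  exact hΛmem u ((hJ u).2 hu)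

/-- **Existence of gluing morphisms (Lemma 2.8(6) of the paper, algebraic core).**
Let `A` be a finite-dimensional associative unital algebra over an algebraically closed
field `k`, which is local: its non-invertible elements form a two-sided ideal `J`.
Let `t : A → k` be a trace (`t(ab) = t(ba)`) such that the bilinear form
`(a,b) ↦ t(ab)` is nondegenerate.  Fix a nonzero `Λ ∈ J^⊥`.  Then for every nonzero
`f ∈ A` there exists `g ∈ A` with `g·f = Λ`. -/
theorem exists_gluing
    {k A : Type*} [Field k] [IsAlgClosed k] [Ring A] [Algebra k A]
    [FiniteDimensional k A]
    (J : Submodule k A)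
    (hJ : ∀ a : A, a ∈ J ↔ ¬ IsUnit a)
    (hJmul : ∀ a ∈ J, ∀ b : A, a * b ∈ J ∧ b * a ∈ J)
    (t : A →ₗ[k] k)
    (htr : ∀ a b : A, t (a * b) = t (b * a))
    (hnd : ∀ a : A, (∀ b : A, t (a * b) = 0) → a = 0)
    (Λ : A) (hΛmem : Λ ∈ orthComplement J t) (hΛ : Λ ≠ 0) :
    ∀ f : A, f ≠ 0 → ∃ g : A, g * f = Λ :=
  exists_gluing_general J hJ t htr hnd Λ hΛmem
end

section
/- Fix a nonzero element Λ of the orthogonal complement J^⊥ = {a ∈ A : t(a·j) = 0 for all j ∈ J}, and let d ∈ A. Then there exists an invertible element g ∈ A with g·d = Λ if and only if d = ζ·Λ for some nonzero scalar ζ ∈ k. Moreover, if d = ζ·Λ with ζ ≠ 0, then (ζ^{-1}·1 + n)·d = Λ for every nilpotent element n ∈ A. -/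
/-- **Invertible gluing morphisms and chromatic compactness (Lemma 2.12 of the paper,
algebraic core).**  Let `A` be a finite-dimensional associative unital algebra over an
algebraically closed field `k`, which is local: its non-invertible elements form a
two-sided ideal `J`.  Let `t : A → k` be a trace (`t(ab) = t(ba)`) with `(a,b) ↦ t(ab)`
nondegenerate.  Fix a nonzero `Λ ∈ J^⊥` and let `d ∈ A`.  Then there is an invertible
`g ∈ A` with `g·d = Λ` iff `d = ζ·Λ` for some nonzero scalar `ζ`; and if `d = ζ·Λ` with
`ζ ≠ 0` then `(ζ⁻¹·1 + n)·d = Λ` for every nilpotent `n ∈ A`. -/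
theorem invertible_gluing_iff
    {k A : Type*} [Field k] [IsAlgClosed k] [Ring A] [Algebra k A]
    [FiniteDimensional k A]
    (J : Submodule k A)
    (hJ : ∀ a : A, a ∈ J ↔ ¬ IsUnit a)
    (hJmul : ∀ a ∈ J, ∀ b : A, a * b ∈ J ∧ b * a ∈ J)
    (t : A →ₗ[k] k)
    (htr : ∀ a b : A, t (a * b) = t (b * a))
    (hnd : ∀ a : A, (∀ b : A, t (a * b) = 0) → a = 0)
    (Λ : A) (hΛmem : Λ ∈ orthComplement J t) (hΛ : Λ ≠ 0)
    (d : A) :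
    ((∃ g : A, IsUnit g ∧ g * d = Λ) ↔ (∃ ζ : k, ζ ≠ 0 ∧ d = ζ • Λ)) ∧
    (∀ ζ : k, ζ ≠ 0 → d = ζ • Λ →
      ∀ n : A, IsNilpotent n → (ζ⁻¹ • (1 : A) + n) * d = Λ) := by
  have hnt : Nontrivial A := nontrivial_of_ne Λ 0 hΛ
  -- J annihilates Λ on the left
  have hann : ∀ j ∈ J, j * Λ = 0 := by
    intro j hj
    apply hnd
    intro b
    have h1 : t (j * Λ * b) = t (Λ * (b * j)) := by
      rw [mul_assoc, htr, mul_assoc]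
    rw [h1, hΛmem _ ((hJmul j hj b).2)]
  have hsplit : ∀ a : A, ∃ ζ : k, a - algebraMap k A ζ ∈ J := by
    intro a
    obtain ⟨ζ, hζ⟩ := spectrum.nonempty_of_isAlgClosed_of_finiteDimensional (𝕜 := k) a
    refine ⟨ζ, ?_⟩
    have : algebraMap k A ζ - a ∈ J := (hJ _).mpr (spectrum.mem_iff.mp hζ)
    have := J.neg_mem this
    rwa [neg_sub] at this
  constructor
  · constructor
    · rintro ⟨g, hg, hgd⟩
      obtain ⟨u, rfl⟩ := hg
      obtain ⟨ζ, hζ⟩ := hsplit (↑u⁻¹ : A)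
      have hd : d = ↑u⁻¹ * Λ := by
        rw [← hgd, ← mul_assoc, ← Units.val_mul, inv_mul_cancel, Units.val_one, one_mul]
      have hz := hann _ hζ
      rw [sub_mul] at hz
      have hdz : d = ζ • Λ := by
        rw [hd, sub_eq_zero.mp hz, ← Algebra.smul_def]
      refine ⟨ζ, ?_, hdz⟩
      intro h0
      apply hΛ
      rw [← hgd, hdz, h0, zero_smul, mul_zero]
    · rintro ⟨ζ, hζ0, rfl⟩
      refine ⟨algebraMap k A ζ⁻¹, (isUnit_iff_ne_zero.mpr (inv_ne_zero hζ0)).map (algebraMap k A), ?_⟩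
      rw [← Algebra.smul_def, smul_smul, inv_mul_cancel₀ hζ0, one_smul]
  · intro ζ hζ0 hdζ n hn
    have hnJ : n ∈ J := by
      rw [hJ]
      intro hu
      obtain ⟨m, hm⟩ := hn
      have := hu.pow m
      rw [hm] at this
      exact not_isUnit_zero this
    rw [hdζ, add_mul, smul_mul_assoc, one_mul, smul_smul, inv_mul_cancel₀ hζ0,
      one_smul, mul_smul_comm, hann n hnJ, smul_zero, add_zero]
end

section
/- The element Λ := k₀·E^{r−1}·F^{r−1} ∈ H is a two-sided cointegral of H: for every x ∈ H one has x·Λ = ε(x)·Λ and Λ·x = ε(x)·Λ. -/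
open scoped TensorProduct

noncomputable section

/-- Generators `E, F, 𝓀` of the quantum group `u_q^{m,n}(sl₂)`. -/
inductive UqGen | E | F | K
  deriving DecidableEq

/-- The free algebra on the generators `E, F, 𝓀`. -/
abbrev UqFree : Type := FreeAlgebra ℂ UqGen

namespace UqFree
/-- The generator `E`. -/
def e : UqFree := FreeAlgebra.ι ℂ UqGen.E
/-- The generator `F`. -/
def f : UqFree := FreeAlgebra.ι ℂ UqGen.F
/-- The generator `𝓀`. -/
def k : UqFree := FreeAlgebra.ι ℂ UqGen.K
end UqFree

/-- The defining relations of `u_q^{m,n}(sl₂)`: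
`E^r = 0`, `F^r = 0`, `𝓀^{mnr} = 1`, `𝓀E = ζ^n E𝓀`, `𝓀F = ζ^{-n} F𝓀` and
`(q - q⁻¹)(EF - FE) = K - K⁻¹` where `K = 𝓀^m` and `K⁻¹ = 𝓀^{mnr-m}`. -/
inductive UqRel (m n r : ℕ) (q ζ : ℂ) : UqFree → UqFree → Prop
  | e_pow : UqRel m n r q ζ (UqFree.e ^ r) 0
  | f_pow : UqRel m n r q ζ (UqFree.f ^ r) 0
  | k_pow : UqRel m n r q ζ (UqFree.k ^ (m * n * r)) 1
  | k_e : UqRel m n r q ζ (UqFree.k * UqFree.e) (ζ ^ n • (UqFree.e * UqFree.k))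
  | k_f : UqRel m n r q ζ (UqFree.k * UqFree.f) (ζ⁻¹ ^ n • (UqFree.f * UqFree.k))
  | e_f : UqRel m n r q ζ ((q - q⁻¹) • (UqFree.e * UqFree.f - UqFree.f * UqFree.e))
      (UqFree.k ^ m - UqFree.k ^ (m * n * r - m))

/-- The quantum group `H = u_q^{m,n}(sl₂)`, as the quotient of the free algebra on
`E, F, 𝓀` by the two-sided ideal generated by the defining relations. -/
abbrev Uq (m n r : ℕ) (q ζ : ℂ) : Type := RingQuot (UqRel m n r q ζ)

/-- The quantum integer `{a} = q^a - q^{-a}`. -/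
def qInt (q : ℂ) (a : ℕ) : ℂ := q ^ a - q⁻¹ ^ a

/-- The quantum factorial `{a}! = {a}{a-1}⋯{1}` (with `{0}! = 1`). -/
def qFact (q : ℂ) (a : ℕ) : ℂ := ∏ b ∈ Finset.range a, qInt q (b + 1)

namespace Uq

variable (m n r : ℕ) (q ζ : ℂ)

/-- The generator `E` of `H`. -/
def E : Uq m n r q ζ := RingQuot.mkAlgHom ℂ (UqRel m n r q ζ) UqFree.e
/-- The generator `F` of `H`. -/
def F : Uq m n r q ζ := RingQuot.mkAlgHom ℂ (UqRel m n r q ζ) UqFree.f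
/-- The generator `𝓀` of `H`. -/
def K : Uq m n r q ζ := RingQuot.mkAlgHom ℂ (UqRel m n r q ζ) UqFree.k

/-- The element `k_i = (1/(mnr)) Σ_{j<mnr} ζ^{-ij} 𝓀^j` (projection onto the
`ζ^i`-eigenspace of `𝓀`). -/
def ki (i : ℕ) : Uq m n r q ζ :=
  ((m * n * r : ℂ))⁻¹ • ∑ j ∈ Finset.range (m * n * r), (ζ ^ (i * j))⁻¹ • K m n r q ζ ^ j

/-- The R-matrix
`R = (Σ_{i,j} ζ^{(m/n)ij} k_i ⊗ k_j) · (Σ_a ({1}^{2a}/{a}!) q^{a(a-1)/2} E^a ⊗ F^a)`. -/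
def Rmat : Uq m n r q ζ ⊗[ℂ] Uq m n r q ζ :=
  (∑ i ∈ Finset.range (m * n * r), ∑ j ∈ Finset.range (m * n * r),
      ζ ^ (m / n * i * j) • (ki m n r q ζ i ⊗ₜ[ℂ] ki m n r q ζ j)) *
  (∑ a ∈ Finset.range r,
      (qInt q 1 ^ (2 * a) / qFact q a * q ^ (a * (a - 1) / 2)) •
        ((E m n r q ζ ^ a) ⊗ₜ[ℂ] (F m n r q ζ ^ a)))

/-- The ribbon element
`θ = K^{r-1} Σ_a ({1}^{2a}/{a}!) q^{a(a-1)/2} S(F^a) (Σ_i ζ^{-(m/n)i²} k_i) E^a`,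
defined in terms of the antipode `S` (here `K^{r-1} = 𝓀^{m(r-1)}`). -/
def theta (S : Uq m n r q ζ →ₗ[ℂ] Uq m n r q ζ) : Uq m n r q ζ :=
  K m n r q ζ ^ (m * (r - 1)) *
    ∑ a ∈ Finset.range r,
      (qInt q 1 ^ (2 * a) / qFact q a * q ^ (a * (a - 1) / 2)) •
        (S (F m n r q ζ ^ a) *
          (∑ i ∈ Finset.range (m * n * r), (ζ ^ (m / n * i ^ 2))⁻¹ • ki m n r q ζ i) *
          E m n r q ζ ^ a)

end Uq


section

variable (m n r : ℕ) (q ζ : ℂ)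

local notation "H" => Uq m n r q ζ
local notation "𝐄" => Uq.E m n r q ζ
local notation "𝐅" => Uq.F m n r q ζ
local notation "𝐤" => Uq.K m n r q ζ


section helpers
variable {A : Type*} [Ring A] [Algebra ℂ A]

lemma pow_mul_comm'' {x y : A} {c : ℂ} (h : x * y = c • (y * x)) :
    ∀ j : ℕ, x ^ j * y = c ^ j • (y * x ^ j)
  | 0 => by simp
  | j + 1 => by
    rw [pow_succ, mul_assoc, h, mul_smul_comm, ← mul_assoc, pow_mul_comm'' h j,
      smul_mul_assoc, smul_smul, ← pow_succ', mul_assoc, ← pow_succ]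

lemma mul_pow_comm'' {x y : A} {c : ℂ} (h : x * y = c • (y * x)) :
    ∀ j : ℕ, x * y ^ j = c ^ j • (y ^ j * x)
  | 0 => by simp
  | j + 1 => by
    rw [pow_succ, ← mul_assoc, mul_pow_comm'' h j, smul_mul_assoc, mul_assoc, h,
      mul_smul_comm, smul_smul, ← mul_assoc, ← pow_succ]

lemma mul_pow_smul' {x y : A} {s : ℂ} (h : x * y = s • x) :
    ∀ t : ℕ, x * y ^ t = s ^ t • x
  | 0 => by simp
  | t + 1 => by
    rw [pow_succ, ← mul_assoc, mul_pow_smul' h t, smul_mul_assoc, h, smul_smul, ← pow_succ]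

lemma sum_geom_mul {x : A} {c : ℂ} {N : ℕ} (hc : c ≠ 0) (hcN : c ^ N = 1) (hxN : x ^ N = 1) :
    (∑ j ∈ Finset.range N, c ^ j • x ^ j) * x = c⁻¹ • ∑ j ∈ Finset.range N, c ^ j • x ^ j := by
  set g : ℕ → A := fun j => c ^ j • x ^ j with hg
  have e1 := Finset.sum_range_succ' g N
  have e2 := Finset.sum_range_succ g N
  have hgN : g N = g 0 := by simp [hg, hcN, hxN]
  have key : ∑ j ∈ Finset.range N, g (j + 1) = ∑ j ∈ Finset.range N, g j := by
    have := e1.symm.trans e2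
    rw [hgN] at this
    exact add_right_cancel this
  calc (∑ j ∈ Finset.range N, c ^ j • x ^ j) * x
      = ∑ j ∈ Finset.range N, c⁻¹ • g (j + 1) := by
        rw [Finset.sum_mul]
        refine Finset.sum_congr rfl fun j _ => ?_
        simp only [hg, smul_smul, ← pow_succ]
        rw [pow_succ', ← mul_assoc, inv_mul_cancel₀ hc, one_mul, smul_mul_assoc, pow_succ]
    _ = c⁻¹ • ∑ j ∈ Finset.range N, g j := by rw [← Finset.smul_sum, key]

lemma mul_sum_geom {x : A} {c : ℂ} {N : ℕ} (hc : c ≠ 0) (hcN : c ^ N = 1) (hxN : x ^ N = 1) :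
    x * (∑ j ∈ Finset.range N, c ^ j • x ^ j) = c⁻¹ • ∑ j ∈ Finset.range N, c ^ j • x ^ j := by
  rw [← sum_geom_mul hc hcN hxN, Finset.mul_sum, Finset.sum_mul]
  exact Finset.sum_congr rfl fun j _ => by
    rw [mul_smul_comm, smul_mul_assoc, ← pow_succ, ← pow_succ']

end helpers

section uqHelpers
variable {A : Type*} [Ring A] [Algebra ℂ A]

lemma uq_comm_f (e f K K' : A) (q2 δ : ℂ)
    (hef : δ • (e * f - f * e) = K - K')
    (hKf : K * f = q2⁻¹ • (f * K)) (hK'f : K' * f = q2 • (f * K')) :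
    ∀ a : ℕ, δ • (e * f ^ (a + 1) - f ^ (a + 1) * e) =
      f ^ a * ((∑ i ∈ Finset.range (a + 1), (q2⁻¹) ^ i) • K
        - (∑ i ∈ Finset.range (a + 1), q2 ^ i) • K') := by
  intro a
  induction a with
  | zero => simpa using hef
  | succ a ih =>
    have expand : δ • (e * f ^ (a + 1 + 1) - f ^ (a + 1 + 1) * e)
        = (δ • (e * f ^ (a + 1) - f ^ (a + 1) * e)) * f
          + f ^ (a + 1) * (δ • (e * f - f * e)) := by
      rw [smul_mul_assoc, mul_smul_comm, ← smul_add]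
      congr 1
      noncomm_ring
    set α := ∑ i ∈ Finset.range (a + 1), (q2⁻¹) ^ i with hα
    set β := ∑ i ∈ Finset.range (a + 1), q2 ^ i with hβ
    have hstep : (α • K - β • K') * f = f * ((q2⁻¹ * α) • K - (q2 * β) • K') := by
      rw [sub_mul, smul_mul_assoc, smul_mul_assoc, hKf, hK'f, smul_smul, smul_smul,
        mul_sub, mul_smul_comm, mul_smul_comm, mul_comm α, mul_comm β]
    rw [expand, ih, hef, mul_assoc, hstep, ← mul_assoc, ← pow_succ, ← mul_add]
    conv_rhs => rw [geom_sum_succ (x := q2⁻¹) (n := a + 1), geom_sum_succ (x := q2) (n := a + 1)]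
    congr 1
    rw [add_smul, add_smul, one_smul, one_smul]
    abel

lemma uq_comm_e (e f K K' : A) (q2 δ : ℂ)
    (hef : δ • (e * f - f * e) = K - K')
    (hKe : ∀ j : ℕ, e ^ j * K = (q2⁻¹) ^ j • (K * e ^ j))
    (hK'e : ∀ j : ℕ, e ^ j * K' = q2 ^ j • (K' * e ^ j)) :
    ∀ a : ℕ, δ • (e ^ (a + 1) * f - f * e ^ (a + 1)) =
      ((∑ i ∈ Finset.range (a + 1), (q2⁻¹) ^ i) • K
        - (∑ i ∈ Finset.range (a + 1), q2 ^ i) • K') * e ^ a := by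
  intro a
  induction a with
  | zero => simpa using hef
  | succ a ih =>
    have expand : δ • (e ^ (a + 1 + 1) * f - f * e ^ (a + 1 + 1))
        = (δ • (e ^ (a + 1) * f - f * e ^ (a + 1))) * e
          + e ^ (a + 1) * (δ • (e * f - f * e)) := by
      rw [smul_mul_assoc, mul_smul_comm, ← smul_add]
      congr 1
      noncomm_ring
    rw [expand, ih, hef, mul_assoc, ← pow_succ, mul_sub, hKe (a + 1), hK'e (a + 1)]
    conv_rhs => rw [Finset.sum_range_succ (fun i => q2⁻¹ ^ i) (a + 1),
      Finset.sum_range_succ (fun i => q2 ^ i) (a + 1)]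
    simp only [sub_mul, add_mul, add_smul, smul_mul_assoc]
    abel

end uqHelpers

/-- **`Λ = k₀ E^{r-1} F^{r-1}` is a two-sided cointegral of `H`.**
For every `x ∈ H` one has `x·Λ = ε(x)·Λ` and `Λ·x = ε(x)·Λ`. -/
theorem uq_cointegral
    (hm : 0 < m) (hn : 0 < n) (hnm : n ∣ m) (hr : 2 ≤ r)
    (hq : IsPrimitiveRoot q (2 * r)) (hζ : IsPrimitiveRoot ζ (m * n * r))
    (hζq : ζ ^ (m * n) = q ^ 2)
    (ε : H →ₐ[ℂ] ℂ)
    (hεE : ε 𝐄 = 0) (hεF : ε 𝐅 = 0) (hεK : ε 𝐤 = 1) :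
    ∀ x : H,
      x * (Uq.ki m n r q ζ 0 * 𝐄 ^ (r - 1) * 𝐅 ^ (r - 1)) =
          ε x • (Uq.ki m n r q ζ 0 * 𝐄 ^ (r - 1) * 𝐅 ^ (r - 1)) ∧
      (Uq.ki m n r q ζ 0 * 𝐄 ^ (r - 1) * 𝐅 ^ (r - 1)) * x =
          ε x • (Uq.ki m n r q ζ 0 * 𝐄 ^ (r - 1) * 𝐅 ^ (r - 1)) := by
  classical
  have hr0 : 0 < r := by omega
  have hr1 : r - 1 + 1 = r := by omega
  have hr2 : r - 2 + 1 = r - 1 := by omega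
  have hN0 : m * n * r ≠ 0 := by positivity
  have hζ0 : ζ ≠ 0 := hζ.ne_zero hN0
  have hq0 : q ≠ 0 := hq.ne_zero (by omega)
  have hζN : ζ ^ (m * n * r) = 1 := hζ.pow_eq_one
  have hc0 : (ζ : ℂ) ^ n ≠ 0 := pow_ne_zero _ hζ0
  have hq20 : (q : ℂ) ^ 2 ≠ 0 := pow_ne_zero _ hq0
  have hδ : q - q⁻¹ ≠ 0 := by
    intro h
    have hq1 : q = q⁻¹ := sub_eq_zero.mp h
    have h2 : q ^ 2 = 1 := by
      calc q ^ 2 = q * q := sq q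
        _ = q * q⁻¹ := by rw [← hq1]
        _ = 1 := mul_inv_cancel₀ hq0
    exact hq.pow_ne_one_of_pos_of_lt (by omega) (by omega) h2
  have hq2r1 : (q ^ 2) ^ r = 1 := by rw [← pow_mul]; exact hq.pow_eq_one
  -- defining relations in the quotient
  have re : 𝐄 ^ r = 0 := by
    simpa [Uq.E] using RingQuot.mkAlgHom_rel ℂ (UqRel.e_pow (m := m) (n := n) (r := r) (q := q) (ζ := ζ))
  have rf : 𝐅 ^ r = 0 := by
    simpa [Uq.F] using RingQuot.mkAlgHom_rel ℂ (UqRel.f_pow (m := m) (n := n) (r := r) (q := q) (ζ := ζ))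
  have rk : 𝐤 ^ (m * n * r) = 1 := by
    simpa [Uq.K] using RingQuot.mkAlgHom_rel ℂ (UqRel.k_pow (m := m) (n := n) (r := r) (q := q) (ζ := ζ))
  have rke : 𝐤 * 𝐄 = ζ ^ n • (𝐄 * 𝐤) := by
    simpa [Uq.K, Uq.E] using RingQuot.mkAlgHom_rel ℂ (UqRel.k_e (m := m) (n := n) (r := r) (q := q) (ζ := ζ))
  have rkf : 𝐤 * 𝐅 = (ζ ^ n)⁻¹ • (𝐅 * 𝐤) := by
    simpa [Uq.K, Uq.F, inv_pow] using RingQuot.mkAlgHom_rel ℂ (UqRel.k_f (m := m) (n := n) (r := r) (q := q) (ζ := ζ))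
  have ref : (q - q⁻¹) • (𝐄 * 𝐅 - 𝐅 * 𝐄) = 𝐤 ^ m - 𝐤 ^ (m * n * r - m) := by
    simpa [Uq.E, Uq.F, Uq.K] using RingQuot.mkAlgHom_rel ℂ (UqRel.e_f (m := m) (n := n) (r := r) (q := q) (ζ := ζ))
  have hek : 𝐄 * 𝐤 = (ζ ^ n)⁻¹ • (𝐤 * 𝐄) := by
    rw [rke, smul_smul, inv_mul_cancel₀ hc0, one_smul]
  have hfk : 𝐅 * 𝐤 = ζ ^ n • (𝐤 * 𝐅) := by
    rw [rkf, smul_smul, mul_inv_cancel₀ hc0, one_smul]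
  -- scalar identities
  have hmN : m ≤ m * n * r :=
    le_trans (Nat.le_mul_of_pos_right m hn) (Nat.le_mul_of_pos_right (m * n) hr0)
  have hζq1 : (ζ ^ n) ^ m = q ^ 2 := by rw [← pow_mul, mul_comm]; exact hζq
  have hcN : (ζ ^ n) ^ (m * n * r) = 1 := by
    rw [← pow_mul, mul_comm, pow_mul, hζN, one_pow]
  have hζq2 : (ζ ^ n) ^ (m * n * r - m) = (q ^ 2)⁻¹ := by
    apply eq_inv_of_mul_eq_one_left
    rw [← hζq1, ← pow_add, Nat.sub_add_cancel hmN]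
    exact hcN
  -- commutation with K = 𝐤^m and K' = 𝐤^(mnr-m)
  have hEK1 : 𝐄 * 𝐤 ^ m = (q ^ 2)⁻¹ • (𝐤 ^ m * 𝐄) := by
    have h := mul_pow_comm'' hek m
    rwa [inv_pow, hζq1] at h
  have hFK1 : 𝐅 * 𝐤 ^ m = q ^ 2 • (𝐤 ^ m * 𝐅) := by
    have h := mul_pow_comm'' hfk m
    rwa [hζq1] at h
  have hK1F : 𝐤 ^ m * 𝐅 = (q ^ 2)⁻¹ • (𝐅 * 𝐤 ^ m) := by
    have h := pow_mul_comm'' rkf m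
    rwa [inv_pow, hζq1] at h
  have hEK2 : 𝐄 * 𝐤 ^ (m * n * r - m) = q ^ 2 • (𝐤 ^ (m * n * r - m) * 𝐄) := by
    have h := mul_pow_comm'' hek (m * n * r - m)
    rwa [inv_pow, hζq2, inv_inv] at h
  have hFK2 : 𝐅 * 𝐤 ^ (m * n * r - m) = (q ^ 2)⁻¹ • (𝐤 ^ (m * n * r - m) * 𝐅) := by
    have h := mul_pow_comm'' hfk (m * n * r - m)
    rwa [hζq2] at h
  have hK2F : 𝐤 ^ (m * n * r - m) * 𝐅 = q ^ 2 • (𝐅 * 𝐤 ^ (m * n * r - m)) := by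
    have h := pow_mul_comm'' rkf (m * n * r - m)
    rwa [inv_pow, hζq2, inv_inv] at h
  have hEjK1 : ∀ j : ℕ, 𝐄 ^ j * 𝐤 ^ m = ((q ^ 2)⁻¹) ^ j • (𝐤 ^ m * 𝐄 ^ j) :=
    pow_mul_comm'' hEK1
  have hEjK2 : ∀ j : ℕ, 𝐄 ^ j * 𝐤 ^ (m * n * r - m) = (q ^ 2) ^ j • (𝐤 ^ (m * n * r - m) * 𝐄 ^ j) :=
    pow_mul_comm'' hEK2
  have hFjK1 : ∀ j : ℕ, 𝐅 ^ j * 𝐤 ^ m = (q ^ 2) ^ j • (𝐤 ^ m * 𝐅 ^ j) :=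
    pow_mul_comm'' hFK1
  have hFjK2 : ∀ j : ℕ, 𝐅 ^ j * 𝐤 ^ (m * n * r - m) = ((q ^ 2)⁻¹) ^ j • (𝐤 ^ (m * n * r - m) * 𝐅 ^ j) :=
    pow_mul_comm'' hFK2
  -- the sums T, P, Q
  set T : H := ∑ j ∈ Finset.range (m * n * r), (1 : ℂ) ^ j • 𝐤 ^ j with hT
  set P : H := ∑ j ∈ Finset.range (m * n * r), (ζ ^ n) ^ j • 𝐤 ^ j with hP
  set Q : H := ∑ j ∈ Finset.range (m * n * r), ((ζ ^ n)⁻¹) ^ j • 𝐤 ^ j with hQ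
  have hTk : T * 𝐤 = T := by
    rw [hT]; simpa using sum_geom_mul (one_ne_zero) (one_pow (m * n * r)) rk
  have hkT : 𝐤 * T = T := by
    rw [hT]; simpa using mul_sum_geom (one_ne_zero) (one_pow (m * n * r)) rk
  have hTpow : ∀ t : ℕ, T * 𝐤 ^ t = T := by
    intro t
    have h1 : T * 𝐤 = (1 : ℂ) • T := by rw [hTk, one_smul]
    simpa using mul_pow_smul' h1 t
  have hPk : P * 𝐤 = (ζ ^ n)⁻¹ • P := by
    rw [hP]; exact sum_geom_mul hc0 hcN rk
  have hPpow := mul_pow_smul' hPk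
  have hPK1 : P * 𝐤 ^ m = (q ^ 2)⁻¹ • P := by
    have h := hPpow m
    rwa [inv_pow, hζq1] at h
  have hPK2 : P * 𝐤 ^ (m * n * r - m) = q ^ 2 • P := by
    have h := hPpow (m * n * r - m)
    rwa [inv_pow, hζq2, inv_inv] at h
  have hFT : 𝐅 * T = P * 𝐅 := by
    rw [hT, hP, Finset.mul_sum, Finset.sum_mul]
    refine Finset.sum_congr rfl fun j _ => ?_
    rw [one_pow, one_smul, mul_pow_comm'' hfk j, smul_mul_assoc]
  have hET : 𝐄 * T = Q * 𝐄 := by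
    rw [hT, hQ, Finset.mul_sum, Finset.sum_mul]
    refine Finset.sum_congr rfl fun j _ => ?_
    rw [one_pow, one_smul, mul_pow_comm'' hek j, smul_mul_assoc]
  have hk0 : Uq.ki m n r q ζ 0 = ((m : ℂ) * n * r)⁻¹ • T := by
    rw [hT]
    simp only [Uq.ki]
    congr 1
    refine Finset.sum_congr rfl fun j _ => ?_
    simp
  -- the element L = T E^{r-1} F^{r-1}
  set L : H := T * 𝐄 ^ (r - 1) * 𝐅 ^ (r - 1) with hL
  have cancel : ∀ X : H, (q - q⁻¹) • X = 0 → X = 0 := by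
    intro X hX
    have h2 := congrArg (fun z : H => (q - q⁻¹)⁻¹ • z) hX
    simpa [smul_smul, inv_mul_cancel₀ hδ] using h2
  have hKL : 𝐤 * L = L := by rw [hL, ← mul_assoc, ← mul_assoc, hkT]
  have hLK : L * 𝐤 = L := by
    have h1 : 𝐅 ^ (r - 1) * 𝐤 = (ζ ^ n) ^ (r - 1) • (𝐤 * 𝐅 ^ (r - 1)) := pow_mul_comm'' hfk (r - 1)
    have h2 : 𝐄 ^ (r - 1) * 𝐤 = ((ζ ^ n)⁻¹) ^ (r - 1) • (𝐤 * 𝐄 ^ (r - 1)) := pow_mul_comm'' hek (r - 1)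
    calc L * 𝐤 = T * 𝐄 ^ (r - 1) * (𝐅 ^ (r - 1) * 𝐤) := by rw [hL, mul_assoc]
      _ = (ζ ^ n) ^ (r - 1) • ((T * (𝐄 ^ (r - 1) * 𝐤)) * 𝐅 ^ (r - 1)) := by
          rw [h1, mul_smul_comm, ← mul_assoc, mul_assoc T]
      _ = ((ζ ^ n) ^ (r - 1) * ((ζ ^ n)⁻¹) ^ (r - 1)) • (T * 𝐤 * 𝐄 ^ (r - 1) * 𝐅 ^ (r - 1)) := by
          rw [h2, mul_smul_comm, smul_mul_assoc, smul_smul, ← mul_assoc]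
      _ = L := by
          rw [← mul_pow, mul_inv_cancel₀ hc0, one_pow, one_smul, hTk, hL]
  have hEL : 𝐄 * L = 0 := by
    rw [hL, ← mul_assoc, ← mul_assoc, hET, mul_assoc Q, ← pow_succ', hr1, re, mul_zero, zero_mul]
  have hLF : L * 𝐅 = 0 := by
    rw [hL, mul_assoc, ← pow_succ, hr1, rf, mul_zero]
  -- the commutator identities at power r-1
  have hGe := uq_comm_e 𝐄 𝐅 (𝐤 ^ m) (𝐤 ^ (m * n * r - m)) (q ^ 2) (q - q⁻¹) ref hEjK1 hEjK2 (r - 2)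
  have hGf := uq_comm_f 𝐄 𝐅 (𝐤 ^ m) (𝐤 ^ (m * n * r - m)) (q ^ 2) (q - q⁻¹) ref hK1F hK2F (r - 2)
  rw [hr2] at hGe hGf
  set α : ℂ := ∑ i ∈ Finset.range (r - 1), ((q ^ 2)⁻¹) ^ i with hαd
  set β : ℂ := ∑ i ∈ Finset.range (r - 1), (q ^ 2) ^ i with hβd
  have key : α * (q ^ 2)⁻¹ - β * (q ^ 2) = 0 := by
    have h1 : β * (q ^ 2) = ∑ i ∈ Finset.range (r - 1), (q ^ 2) ^ (i + 1) := by
      rw [hβd, Finset.sum_mul]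
      exact Finset.sum_congr rfl fun i _ => (pow_succ _ _).symm
    have h2 : α * (q ^ 2)⁻¹ = ∑ i ∈ Finset.range (r - 1), ((q ^ 2)⁻¹) ^ (i + 1) := by
      rw [hαd, Finset.sum_mul]
      exact Finset.sum_congr rfl fun i _ => (pow_succ _ _).symm
    have h3 : ∑ i ∈ Finset.range (r - 1), (q ^ 2) ^ (i + 1)
        = ∑ i ∈ Finset.range (r - 1), ((q ^ 2)⁻¹) ^ (i + 1) := by
      rw [← Finset.sum_range_reflect]
      refine Finset.sum_congr rfl fun i hi => ?_
      have hi' : i < r - 1 := Finset.mem_range.mp hi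
      have hsum : r - 1 - 1 - i + 1 + (i + 1) = r := by omega
      have hone : (q ^ 2) ^ (r - 1 - 1 - i + 1) * (q ^ 2) ^ (i + 1) = 1 := by
        rw [← pow_add, hsum]; exact hq2r1
      rw [inv_pow]
      exact eq_inv_of_mul_eq_one_left hone
    rw [h1, h2, h3, sub_self]
  -- F·L = 0
  have hFL : 𝐅 * L = 0 := by
    apply cancel
    have e1 : 𝐅 * L = P * (𝐅 * 𝐄 ^ (r - 1)) * 𝐅 ^ (r - 1) := by
      rw [hL, ← mul_assoc, ← mul_assoc, hFT, mul_assoc P]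
    have h2 : (q - q⁻¹) • (𝐅 * 𝐄 ^ (r - 1)) =
        (q - q⁻¹) • (𝐄 ^ (r - 1) * 𝐅) - (α • 𝐤 ^ m - β • 𝐤 ^ (m * n * r - m)) * 𝐄 ^ (r - 2) := by
      rw [← hGe, smul_sub]; abel
    calc (q - q⁻¹) • (𝐅 * L) = P * ((q - q⁻¹) • (𝐅 * 𝐄 ^ (r - 1))) * 𝐅 ^ (r - 1) := by
          rw [e1, mul_smul_comm, smul_mul_assoc]
      _ = P * ((q - q⁻¹) • (𝐄 ^ (r - 1) * 𝐅)) * 𝐅 ^ (r - 1)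
          - P * ((α • 𝐤 ^ m - β • 𝐤 ^ (m * n * r - m)) * 𝐄 ^ (r - 2)) * 𝐅 ^ (r - 1) := by
          rw [h2, mul_sub, sub_mul]
      _ = 0 := by
          have t1 : P * ((q - q⁻¹) • (𝐄 ^ (r - 1) * 𝐅)) * 𝐅 ^ (r - 1) = 0 := by
            rw [mul_smul_comm, smul_mul_assoc, mul_assoc, mul_assoc, ← pow_succ', hr1, rf,
              mul_zero, mul_zero, smul_zero]
          have inner : P * (α • 𝐤 ^ m - β • 𝐤 ^ (m * n * r - m)) = 0 := by
            rw [mul_sub, mul_smul_comm, mul_smul_comm, hPK1, hPK2, smul_smul, smul_smul,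
              ← sub_smul, key, zero_smul]
          have t2 : P * ((α • 𝐤 ^ m - β • 𝐤 ^ (m * n * r - m)) * 𝐄 ^ (r - 2)) * 𝐅 ^ (r - 1) = 0 := by
            rw [← mul_assoc P, inner, zero_mul, zero_mul]
          rw [t1, t2, sub_zero]
  -- L·E = 0
  have hLE : L * 𝐄 = 0 := by
    apply cancel
    have e1 : L * 𝐄 = T * 𝐄 ^ (r - 1) * (𝐅 ^ (r - 1) * 𝐄) := by rw [hL, mul_assoc]
    have h2 : (q - q⁻¹) • (𝐅 ^ (r - 1) * 𝐄) =
        (q - q⁻¹) • (𝐄 * 𝐅 ^ (r - 1)) - 𝐅 ^ (r - 2) * (α • 𝐤 ^ m - β • 𝐤 ^ (m * n * r - m)) := by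
      rw [← hGf, smul_sub]; abel
    calc (q - q⁻¹) • (L * 𝐄) = T * 𝐄 ^ (r - 1) * ((q - q⁻¹) • (𝐅 ^ (r - 1) * 𝐄)) := by
          rw [e1, mul_smul_comm]
      _ = T * 𝐄 ^ (r - 1) * ((q - q⁻¹) • (𝐄 * 𝐅 ^ (r - 1)))
          - T * 𝐄 ^ (r - 1) * (𝐅 ^ (r - 2) * (α • 𝐤 ^ m - β • 𝐤 ^ (m * n * r - m))) := by
          rw [h2, mul_sub]
      _ = 0 := by
          have t1 : T * 𝐄 ^ (r - 1) * ((q - q⁻¹) • (𝐄 * 𝐅 ^ (r - 1))) = 0 := by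
            rw [mul_smul_comm, ← mul_assoc, mul_assoc T, ← pow_succ, hr1, re,
              mul_zero, zero_mul, smul_zero]
          have t2 : T * 𝐄 ^ (r - 1) * (𝐅 ^ (r - 2) * (α • 𝐤 ^ m - β • 𝐤 ^ (m * n * r - m))) = 0 := by
            have inner : 𝐅 ^ (r - 2) * (α • 𝐤 ^ m - β • 𝐤 ^ (m * n * r - m))
                = (α * (q ^ 2) ^ (r - 2)) • (𝐤 ^ m * 𝐅 ^ (r - 2))
                  - (β * ((q ^ 2)⁻¹) ^ (r - 2)) • (𝐤 ^ (m * n * r - m) * 𝐅 ^ (r - 2)) := by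
              rw [mul_sub, mul_smul_comm, mul_smul_comm, hFjK1 (r - 2), hFjK2 (r - 2),
                smul_smul, smul_smul]
            have push1 : T * 𝐄 ^ (r - 1) * (𝐤 ^ m * 𝐅 ^ (r - 2))
                = ((q ^ 2)⁻¹) ^ (r - 1) • (T * 𝐄 ^ (r - 1) * 𝐅 ^ (r - 2)) := by
              rw [← mul_assoc, mul_assoc T, hEjK1 (r - 1), mul_smul_comm, smul_mul_assoc,
                ← mul_assoc, hTpow m]
            have push2 : T * 𝐄 ^ (r - 1) * (𝐤 ^ (m * n * r - m) * 𝐅 ^ (r - 2))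
                = (q ^ 2) ^ (r - 1) • (T * 𝐄 ^ (r - 1) * 𝐅 ^ (r - 2)) := by
              rw [← mul_assoc, mul_assoc T, hEjK2 (r - 1), mul_smul_comm, smul_mul_assoc,
                ← mul_assoc, hTpow (m * n * r - m)]
            have hc : α * (q ^ 2) ^ (r - 2) * ((q ^ 2)⁻¹) ^ (r - 1)
                - β * ((q ^ 2)⁻¹) ^ (r - 2) * (q ^ 2) ^ (r - 1) = 0 := by
              have h1 : (q ^ 2) ^ (r - 2) * ((q ^ 2)⁻¹) ^ (r - 1) = (q ^ 2)⁻¹ := by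
                rw [← hr2, pow_succ ((q ^ 2)⁻¹) (r - 2), ← mul_assoc, ← mul_pow,
                  mul_inv_cancel₀ hq20, one_pow, one_mul]
              have h2' : ((q ^ 2)⁻¹) ^ (r - 2) * (q ^ 2) ^ (r - 1) = q ^ 2 := by
                rw [← hr2, pow_succ (q ^ 2) (r - 2), ← mul_assoc, ← mul_pow,
                  inv_mul_cancel₀ hq20, one_pow, one_mul]
              rw [mul_assoc, mul_assoc, h1, h2']
              exact key
            rw [inner, mul_sub, mul_smul_comm, mul_smul_comm, push1, push2,
              smul_smul, smul_smul, ← sub_smul, hc, zero_smul]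
          rw [t1, t2, sub_zero]
  -- put everything together
  intro x
  obtain ⟨y, rfl⟩ := RingQuot.mkAlgHom_surjective ℂ (UqRel m n r q ζ) x
  have hΛ : Uq.ki m n r q ζ 0 * 𝐄 ^ (r - 1) * 𝐅 ^ (r - 1) = ((m : ℂ) * n * r)⁻¹ • L := by
    rw [hk0, smul_mul_assoc, smul_mul_assoc, ← hL]
  induction y using FreeAlgebra.induction with
  | grade0 c =>
      have hmap : (RingQuot.mkAlgHom ℂ (UqRel m n r q ζ)) (algebraMap ℂ UqFree c)
          = algebraMap ℂ H c := AlgHom.commutes _ c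
      rw [hmap]
      have hεc : ε (algebraMap ℂ H c) = c := by
        rw [AlgHom.commutes]; simp
      rw [hεc]
      constructor
      · exact (Algebra.smul_def c _).symm
      · rw [← Algebra.commutes]
        exact (Algebra.smul_def c _).symm
  | grade1 g =>
      cases g with
      | E =>
          constructor
          · show 𝐄 * _ = ε 𝐄 • _
            rw [hΛ, hεE, zero_smul, mul_smul_comm, hEL, smul_zero]
          · show _ * 𝐄 = ε 𝐄 • _
            rw [hΛ, hεE, zero_smul, smul_mul_assoc, hLE, smul_zero]
      | F =>
          constructor
          · show 𝐅 * _ = ε 𝐅 • _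
            rw [hΛ, hεF, zero_smul, mul_smul_comm, hFL, smul_zero]
          · show _ * 𝐅 = ε 𝐅 • _
            rw [hΛ, hεF, zero_smul, smul_mul_assoc, hLF, smul_zero]
      | K =>
          constructor
          · show 𝐤 * _ = ε 𝐤 • _
            rw [hΛ, hεK, one_smul, mul_smul_comm, hKL]
          · show _ * 𝐤 = ε 𝐤 • _
            rw [hΛ, hεK, one_smul, smul_mul_assoc, hLK]
  | mul a b ha hb =>
      rw [map_mul]
      constructor
      · rw [mul_assoc, hb.1, mul_smul_comm, ha.1, smul_smul, map_mul,
          mul_comm (ε ((RingQuot.mkAlgHom ℂ (UqRel m n r q ζ)) b))]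
      · rw [← mul_assoc, ha.2, smul_mul_assoc, hb.2, smul_smul, map_mul]
  | add a b ha hb =>
      rw [map_add]
      constructor
      · rw [add_mul, ha.1, hb.1, map_add, add_smul]
      · rw [mul_add, ha.2, hb.2, map_add, add_smul]


end

end
end
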